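/- Define ψ_n = ∑_{k=0}^{n−1} (−1)^k r_{(1^k, n−k)} in NSym, where r_α are the ribbon elements and (1^k, n−k) denotes the composition with k parts equal to 1 followed by one part n−k. Then ψ_n = ∑_{β ⊨ n} (−1)^{1+ℓ(β)} β_{ℓ(β)} h_β. -/

import Mathlib

def IsComposition (n : ℕ) (l : List ℕ) : Prop := (∀ x ∈ l, 0 < x) ∧ l.sum = n

def cset (l : List ℕ) : Finset ℕ :=
  (Finset.range (l.length - 1)).image (fun i => (l.take (i+1)).sum)


noncomputable def comps (n : ℕ) : Finset (List ℕ) :=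
  (Finset.univ : Finset (Composition n)).image Composition.blocks

noncomputable def h (k : ℕ) : FreeAlgebra ℚ ℕ := if k = 0 then 1 else FreeAlgebra.ι ℚ k

noncomputable def hC (β : List ℕ) : FreeAlgebra ℚ ℕ := (β.map h).prod


noncomputable def rib (α : List ℕ) : FreeAlgebra ℚ ℕ :=
  ∑ β ∈ (comps α.sum).filter (fun β => cset β ⊆ cset α),
    ((-1 : ℚ) ^ (α.length - β.length)) • hC β


noncomputable def psi (k : ℕ) : FreeAlgebra ℚ ℕ :=
  ∑ β ∈ comps k, (((-1 : ℚ) ^ (1 + β.length)) * (β.getLastD 0 : ℚ)) • hC β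

lemma mem_comps {n : ℕ} {β : List ℕ} : β ∈ comps n ↔ (∀ x ∈ β, 0 < x) ∧ β.sum = n := by
  constructor
  · intro hmem
    simp only [comps, Finset.mem_image, Finset.mem_univ, true_and] at hmem
    obtain ⟨c, rfl⟩ := hmem
    exact ⟨fun x hx => c.blocks_pos hx, c.blocks_sum⟩
  · rintro ⟨h1, h2⟩
    simp only [comps, Finset.mem_image, Finset.mem_univ, true_and]
    exact ⟨⟨β, fun {i} hi => h1 i hi, h2⟩, rfl⟩

lemma neg_one_pow_sub {a b : ℕ} (hb : b ≤ a) : ((-1:ℚ))^(a-b) = (-1)^(a+b) := by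
  have h : a - b + 2*b = a + b := by omega
  calc ((-1:ℚ))^(a-b) = (-1)^(a-b) * ((-1)^2)^b := by norm_num
    _ = (-1)^(a-b+2*b) := by rw [← pow_mul, ← pow_add]
    _ = (-1)^(a+b) := by rw [h]

lemma cset_hook {n k x : ℕ} :
    x ∈ cset (List.replicate k 1 ++ [n-k]) ↔ 1 ≤ x ∧ x ≤ k := by
  simp only [cset, Finset.mem_image, Finset.mem_range, List.length_append,
    List.length_replicate, List.length_singleton]
  constructor
  · rintro ⟨i, hi, rfl⟩
    have hi' : i < k := by omega
    rw [List.take_append_of_le_length (by simpa using hi'), List.take_replicate]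
    simp [Nat.min_eq_left hi']
    omega
  · rintro ⟨hx1, hx2⟩
    refine ⟨x - 1, by omega, ?_⟩
    have hx : x - 1 + 1 = x := by omega
    rw [hx, List.take_append_of_le_length (by simpa using hx2), List.take_replicate]
    simp [Nat.min_eq_left hx2]

lemma take_len_sub_one_sum {β : List ℕ} (hne : β ≠ []) :
    (β.take (β.length - 1)).sum + β.getLastD 0 = β.sum := by
  conv_rhs => rw [← List.dropLast_append_getLast hne]
  rw [List.sum_append, List.sum_singleton, ← List.dropLast_eq_take,
    List.getLastD_eq_getLast?, List.getLast?_eq_getLast hne]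
  simp

lemma cset_subset_iff {n k : ℕ} {β : List ℕ} (hpos : ∀ x ∈ β, 0 < x)
    (hsum : β.sum = n) (hn : 1 ≤ n) :
    cset β ⊆ cset (List.replicate k 1 ++ [n-k]) ↔ n - β.getLastD 0 ≤ k := by
  have hne : β ≠ [] := by rintro rfl; simp at hsum; omega
  have hkey := take_len_sub_one_sum hne
  constructor
  · intro hsub
    rcases Nat.lt_or_ge β.length 2 with h2 | h2
    · have hl : β.length = 1 := by
        have := List.length_pos_iff.mpr hne; omega
      rw [hl, Nat.sub_self, List.take_zero, List.sum_nil, Nat.zero_add] at hkey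
      omega
    · have hmem : (β.take (β.length - 1)).sum ∈ cset β := by
        simp only [cset, Finset.mem_image, Finset.mem_range]
        exact ⟨β.length - 2, by omega,
          by rw [show β.length - 2 + 1 = β.length - 1 from by omega]⟩
      have := (cset_hook.mp (hsub hmem)).2
      omega
  · intro hle x hx
    simp only [cset, Finset.mem_image, Finset.mem_range] at hx
    obtain ⟨i, hi, rfl⟩ := hx
    rw [cset_hook]
    constructor
    · have htne : β.take (i+1) ≠ [] := by
        rw [← List.length_pos_iff, List.length_take]; omega
      obtain ⟨y, hy⟩ := List.exists_mem_of_ne_nil _ htne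
      have h1 := hpos y (List.mem_of_mem_take hy)
      have h2 := List.single_le_sum (fun x (_ : x ∈ β.take (i+1)) => Nat.zero_le x) y hy
      omega
    · have hmono : (β.take (i+1)).sum ≤ (β.take (β.length - 1)).sum := by
        have hpre : β.take (i+1) <+: β.take (β.length - 1) :=
          List.prefix_take_iff.mpr ⟨List.take_prefix _ _, by rw [List.length_take]; omega⟩
        obtain ⟨t, ht⟩ := hpre
        rw [← ht, List.sum_append]; omega
      omega

lemma neg_one_pow_mod (a : ℕ) : ((-1:ℚ))^a = (-1)^(a % 2) := by
  conv_lhs => rw [← Nat.div_add_mod a 2]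
  rw [pow_add, pow_mul]
  norm_num

lemma rib_hook {n k : ℕ} (hn : 1 ≤ n) (hkn : k < n) :
    rib (List.replicate k 1 ++ [n-k]) =
      ∑ β ∈ comps n, (if n - β.getLastD 0 ≤ k then ((-1:ℚ)^(k+1-β.length)) else 0) • hC β := by
  have hs : (List.replicate k 1 ++ [n-k]).sum = k * 1 + (n - k) := by
    simp [List.sum_append, List.sum_replicate, mul_comm]
  have hlen : (List.replicate k 1 ++ [n-k]).length = k+1 := by simp
  have hs' : (List.replicate k 1 ++ [n-k]).sum = n := by rw [hs]; omega
  rw [rib, hs', hlen, Finset.sum_filter]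
  apply Finset.sum_congr rfl
  intro β hβ
  obtain ⟨hpos, hbs⟩ := mem_comps.mp hβ
  simp only [cset_subset_iff hpos hbs hn]
  split
  · rfl
  · rw [zero_smul]

lemma length_le_sum {β : List ℕ} (hpos : ∀ x ∈ β, 0 < x) : β.length ≤ β.sum := by
  induction β with
  | nil => simp
  | cons a t ih =>
    simp only [List.length_cons, List.sum_cons]
    have ha := hpos a (List.mem_cons_self)
    have := ih (fun x hx => hpos x (List.mem_cons_of_mem a hx))
    omega

/-- ψ_n = ∑_{k=0}^{n−1} (−1)^k r_{(1^k, n−k)}. -/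
theorem stmt16 (n : ℕ) (hn : 1 ≤ n) :
    psi n = ∑ k ∈ Finset.range n, ((-1 : ℚ) ^ k) • rib (List.replicate k 1 ++ [n - k]) := by
  have step : ∀ k ∈ Finset.range n, ((-1:ℚ)^k) • rib (List.replicate k 1 ++ [n-k])
      = ∑ β ∈ comps n, (if n - β.getLastD 0 ≤ k then ((-1:ℚ)^(1+β.length)) else 0) • hC β := by
    intro k hk
    rw [Finset.mem_range] at hk
    rw [rib_hook hn hk, Finset.smul_sum]
    apply Finset.sum_congr rfl
    intro β hβ
    obtain ⟨hpos, hbs⟩ := mem_comps.mp hβ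
    have hne : β ≠ [] := by rintro rfl; simp at hbs; omega
    rw [smul_smul]
    congr 1
    split_ifs with hcond
    · have hkey := take_len_sub_one_sum hne
      have hlpos := List.length_pos_iff.mpr hne
      have htl : β.length - 1 ≤ (β.take (β.length - 1)).sum := by
        have := length_le_sum (β := β.take (β.length - 1))
          (fun x hx => hpos x (List.mem_of_mem_take hx))
        rw [List.length_take] at this
        omega
      have hlb : β.length ≤ k+1 := by omega
      rw [neg_one_pow_sub hlb, ← pow_add, neg_one_pow_mod (k + (k+1+β.length)),
        neg_one_pow_mod (1 + β.length)]
      congr 1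
      omega
    · ring
  rw [Finset.sum_congr rfl step, Finset.sum_comm, psi]
  apply Finset.sum_congr rfl
  intro β hβ
  obtain ⟨hpos, hbs⟩ := mem_comps.mp hβ
  have hne : β ≠ [] := by rintro rfl; simp at hbs; omega
  rw [← Finset.sum_smul]
  congr 1
  rw [Finset.sum_ite, Finset.sum_const, Finset.sum_const_zero, add_zero]
  have hL : β.getLastD 0 ∈ β := by
    rw [List.getLastD_eq_getLast? , List.getLast?_eq_getLast hne]
    exact List.getLast_mem hne
  have hLn : β.getLastD 0 ≤ n := by
    have := List.single_le_sum (fun x (_ : x ∈ β) => Nat.zero_le x) _ hL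
    omega
  have hfilt : (Finset.range n).filter (fun k => n - β.getLastD 0 ≤ k)
      = Finset.Ico (n - β.getLastD 0) n := by
    ext x; simp only [Finset.mem_filter, Finset.mem_range, Finset.mem_Ico]; omega
  rw [hfilt, Nat.card_Ico, nsmul_eq_mul]
  have : n - (n - β.getLastD 0) = β.getLastD 0 := by omega
  rw [this, mul_comm]
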